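/- Let R > 0, 0 < r < R, D > 0, t > 0, A > 0. The denominator appearing in Φ̃_D for the axially oriented case, namely Q(t) = (1/(R-r)) exp(-(R-r)²/(4Dt)) + (1/(R+r)) exp(-(R+r)²/(4Dt)) - (2R/(R²+r²)) exp(-(R²+r²)/(4Dt)), is strictly positive; consequently C₂(t) = 2A / Q(t) > 0. -/

import Mathlib

open Real

theorem tripole_denominator_pos
    (R r D t A : ℝ) (hR : 0 < R) (hr : 0 < r) (hrR : r < R)
    (hD : 0 < D) (ht : 0 < t) (hA : 0 < A) :
    0 < (1 / (R - r)) * Real.exp (-(R - r) ^ 2 / (4 * D * t)) +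
          (1 / (R + r)) * Real.exp (-(R + r) ^ 2 / (4 * D * t)) -
          (2 * R / (R ^ 2 + r ^ 2)) * Real.exp (-(R ^ 2 + r ^ 2) / (4 * D * t)) ∧
      0 < 2 * A /
        ((1 / (R - r)) * Real.exp (-(R - r) ^ 2 / (4 * D * t)) +
          (1 / (R + r)) * Real.exp (-(R + r) ^ 2 / (4 * D * t)) -
          (2 * R / (R ^ 2 + r ^ 2)) * Real.exp (-(R ^ 2 + r ^ 2) / (4 * D * t))) := by
  have hs0 : 0 < 4 * D * t := by positivity
  have h1 : 0 < R - r := by linarith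
  have h2 : 0 < R + r := by linarith
  set x := 2 * R * r / (4 * D * t) with hx
  have hx0 : 0 < x := by positivity
  have e1 : Real.exp (-(R - r) ^ 2 / (4 * D * t)) =
      Real.exp (-(R ^ 2 + r ^ 2) / (4 * D * t)) * Real.exp x := by
    rw [← Real.exp_add, hx, ← add_div]
    ring_nf
  have e2 : Real.exp (-(R + r) ^ 2 / (4 * D * t)) =
      Real.exp (-(R ^ 2 + r ^ 2) / (4 * D * t)) * Real.exp (-x) := by
    rw [← Real.exp_add, hx, ← sub_eq_add_neg, div_sub_div_same]
    ring_nf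
  set u := Real.exp (-(R ^ 2 + r ^ 2) / (4 * D * t)) with hu
  have hu0 : 0 < u := Real.exp_pos _
  have ha : x + 1 < Real.exp x := Real.add_one_lt_exp (ne_of_gt hx0)
  have hb : -x + 1 < Real.exp (-x) := Real.add_one_lt_exp (by simpa using ne_of_gt hx0)
  have hb0 : 0 < Real.exp (-x) := Real.exp_pos _
  have hb1 : Real.exp (-x) < 1 := by
    rw [Real.exp_lt_one_iff]; linarith
  have hab : 2 < Real.exp x + Real.exp (-x) := by linarith
  -- coefficient comparison: 2R/(R²+r²) < 1/(R-r) + 1/(R+r)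
  have hP : (0:ℝ) < 1 / (R - r) := by positivity
  have hM : (0:ℝ) < 1 / (R + r) := by positivity
  have hPM : 1 / (R + r) < 1 / (R - r) := by
    apply one_div_lt_one_div_of_lt h1
    linarith
  have hC : 2 * R / (R ^ 2 + r ^ 2) < 1 / (R - r) + 1 / (R + r) := by
    rw [div_add_div _ _ (ne_of_gt h1) (ne_of_gt h2), div_lt_div_iff₀ (by positivity) (by positivity)]
    nlinarith [sq_nonneg r, sq_nonneg R, mul_pos hr hr, mul_pos hR (mul_pos hr hr)]
  have hQ : 0 < (1 / (R - r)) * Real.exp (-(R - r) ^ 2 / (4 * D * t)) +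
          (1 / (R + r)) * Real.exp (-(R + r) ^ 2 / (4 * D * t)) -
          (2 * R / (R ^ 2 + r ^ 2)) * Real.exp (-(R ^ 2 + r ^ 2) / (4 * D * t)) := by
    rw [e1, e2]
    have key : 0 < (1 / (R - r)) * Real.exp x + (1 / (R + r)) * Real.exp (-x) -
        2 * R / (R ^ 2 + r ^ 2) := by
      nlinarith [mul_pos hM hb0, mul_lt_mul_of_pos_right hPM (sub_pos.mpr (by linarith : (1:ℝ) < Real.exp x))]
    calc (0:ℝ) = u * 0 := by ring
    _ < u * ((1 / (R - r)) * Real.exp x + (1 / (R + r)) * Real.exp (-x) -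
        2 * R / (R ^ 2 + r ^ 2)) := by
        exact mul_lt_mul_of_pos_left key hu0
    _ = 1 / (R - r) * (u * Real.exp x) + 1 / (R + r) * (u * Real.exp (-x)) -
        2 * R / (R ^ 2 + r ^ 2) * u := by ring
  exact ⟨hQ, by positivity⟩
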